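/- arXiv:1409.5509 — 2 statements merged into one kernel-verified Lean document; each statement's English description precedes it below -/
import Mathlib

section
/- Let S, V : [0,∞) → [0,∞) be C¹ and φ : [0,∞) → (0,∞) nonincreasing, with S'(t) ≤ V(t) and V'(t) ≤ -φ(S(t))V(t). Define the Lyapunov functional E(t) = V(t) + ψ(S(t)) where ψ(s) = ∫₀ˢ φ(r) dr. Then E is nonincreasing in t: E(t) ≤ E(0) for all t ≥ 0. -/
open Set

/-!
Since `φ` need not be continuous, `ψ` need not be differentiable and the chain rule
`(ψ ∘ S)' = φ(S) S'` is unavailable. Instead we use that `ψ` is concave with supergradient `φ(s)`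
at `s`: to the right of any `x`, `E` grows no faster than `V + φ(S x) S`, whose right derivative at
`x` is `V' + φ(S x) S' ≤ -φ(S x) V + φ(S x) V = 0`. A continuous function majorized in this way
at every point is nonincreasing, by the Dini-derivative comparison theorem.
-/

open Filter Topology

theorem le_left_of_forall_sub_le_of_hasDerivWithinAt_nonpos {g : ℝ → ℝ} {a b : ℝ}
    (hg : ContinuousOn g (Icc a b))
    (hmaj : ∀ x ∈ Ico a b, ∃ h : ℝ → ℝ, ∃ d ≤ 0, HasDerivWithinAt h d (Ioi x) x ∧
      ∀ᶠ z in 𝓝[>] x, g z - g x ≤ h z - h x) :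
    ∀ x ∈ Icc a b, g x ≤ g a := by
  refine image_le_of_liminf_slope_right_le_deriv_boundary hg le_rfl continuousOn_const
    (fun x _ => hasDerivWithinAt_const x _ (g a)) fun x hx r hr => ?_
  obtain ⟨h, d, hd, hh, hgh⟩ := hmaj x hx
  have hslope_h : ∀ᶠ z in 𝓝[>] x, slope h x z < r :=
    ((hasDerivWithinAt_iff_tendsto_slope' self_notMem_Ioi).mp hh).eventually
      (gt_mem_nhds (hd.trans_lt hr))
  refine (hslope_h.and (hgh.and self_mem_nhdsWithin)).mono ?_ |>.frequently
  rintro z ⟨hz_lt, hz_le, hxz⟩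
  calc slope g x z = (g z - g x) / (z - x) := slope_def_field g x z
    _ ≤ (h z - h x) / (z - x) := div_le_div_of_nonneg_right hz_le (sub_pos.2 hxz).le
    _ = slope h x z := (slope_def_field h x z).symm
    _ < r := hz_lt

theorem continuousOn_primitive_Ici_of_antitoneOn {φ : ℝ → ℝ} {a : ℝ}
    (hφ : AntitoneOn φ (Ici a)) : ContinuousOn (fun s => ∫ r in a..s, φ r) (Ici a) := by
  intro s hs
  have hIcc : uIcc a (s + 1) = Icc a (s + 1) := uIcc_of_le (hs.out.trans (lt_add_one s).le)
  have hcont := intervalIntegral.continuousOn_primitive_interval (μ := MeasureTheory.volume)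
    ((hφ.mono (hIcc ▸ Icc_subset_Ici_self)).integrableOn_isCompact isCompact_uIcc)
  refine (hcont s (hIcc ▸ ⟨hs, (lt_add_one s).le⟩)).mono_of_mem_nhdsWithin ?_
  rw [hIcc, ← Ici_inter_Iic]
  exact inter_mem_nhdsWithin _ (Iic_mem_nhds (lt_add_one s))

theorem integral_le_mul_sub_of_antitoneOn {φ : ℝ → ℝ} {a b : ℝ}
    (hφ : AntitoneOn φ (uIcc a b)) : ∫ r in a..b, φ r ≤ φ a * (b - a) := by
  rcases le_total a b with hab | hba
  · calc ∫ r in a..b, φ r ≤ ∫ _ in a..b, φ a :=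
          intervalIntegral.integral_mono_on hab hφ.intervalIntegrable intervalIntegrable_const
            fun x hx => hφ left_mem_uIcc (Icc_subset_uIcc hx) hx.1
      _ = φ a * (b - a) := by simp [mul_comm]
  · rw [intervalIntegral.integral_symm, neg_le, ← mul_neg, neg_sub]
    calc φ a * (a - b) = ∫ _ in b..a, φ a := by simp [mul_comm]
      _ ≤ ∫ r in b..a, φ r :=
          intervalIntegral.integral_mono_on hba intervalIntegrable_const hφ.intervalIntegrable.symm
            fun x hx => hφ (Icc_subset_uIcc' hx) left_mem_uIcc hx.2

theorem primitive_sub_le_mul_sub_of_antitoneOn {φ : ℝ → ℝ} {a b c : ℝ}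
    (hφ : AntitoneOn φ (Ici c)) (ha : c ≤ a) (hb : c ≤ b) :
    (∫ r in c..b, φ r) - ∫ r in c..a, φ r ≤ φ a * (b - a) := by
  have hsub : ∀ {x y : ℝ}, c ≤ x → c ≤ y → uIcc x y ⊆ Ici c :=
    fun hx hy _ hz => le_trans (le_inf hx hy) hz.1
  rw [intervalIntegral.integral_interval_sub_left (hφ.mono (hsub le_rfl hb)).intervalIntegrable
    (hφ.mono (hsub le_rfl ha)).intervalIntegrable]
  exact integral_le_mul_sub_of_antitoneOn (hφ.mono (hsub ha hb))

theorem stmt_2_general (S V φ : ℝ → ℝ)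
    (hS : ContDiffOn ℝ 1 S (Ici 0)) (hV : ContDiffOn ℝ 1 V (Ici 0))
    (hSpos : ∀ t ∈ Ici (0:ℝ), 0 ≤ S t)
    (hφpos : ∀ r ∈ Ici (0:ℝ), 0 < φ r) (hφanti : AntitoneOn φ (Ici 0))
    (hS' : ∀ t ∈ Ici (0:ℝ), derivWithin S (Ici 0) t ≤ V t)
    (hV' : ∀ t ∈ Ici (0:ℝ), derivWithin V (Ici 0) t ≤ -φ (S t) * V t)
    (ψ : ℝ → ℝ) (hψ : ∀ s, ψ s = ∫ r in (0:ℝ)..s, φ r) :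
    ∀ t ∈ Ici (0:ℝ), V t + ψ (S t) ≤ V 0 + ψ (S 0) := by
  intro t ht
  obtain rfl : ψ = fun s => ∫ r in (0:ℝ)..s, φ r := funext hψ
  have hS_deriv x (hx : x ∈ Ici (0:ℝ)) : HasDerivWithinAt S (derivWithin S (Ici 0) x) (Ici 0) x :=
    (hS.differentiableOn one_ne_zero x hx).hasDerivWithinAt
  have hV_deriv x (hx : x ∈ Ici (0:ℝ)) : HasDerivWithinAt V (derivWithin V (Ici 0) x) (Ici 0) x :=
    (hV.differentiableOn one_ne_zero x hx).hasDerivWithinAt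
  refine le_left_of_forall_sub_le_of_hasDerivWithinAt_nonpos
    ((hV.continuousOn.mono Icc_subset_Ici_self).add
      ((continuousOn_primitive_Ici_of_antitoneOn hφanti).comp
        (hS.continuousOn.mono Icc_subset_Ici_self) fun u hu => hSpos u hu.1))
    (fun x hx => ?_) t ⟨ht, le_rfl⟩
  have hx0 : x ∈ Ici (0:ℝ) := hx.1
  refine ⟨fun z => V z + φ (S x) * S z, _, ?_,
    ((hV_deriv x hx0).add ((hS_deriv x hx0).const_mul _)).mono
      fun z hz => hx0.out.trans hz.out.le, ?_⟩
  · linarith [hV' x hx0, mul_le_mul_of_nonneg_left (hS' x hx0) (hφpos _ (hSpos x hx0)).le]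
  · filter_upwards [self_mem_nhdsWithin] with z hz
    have := primitive_sub_le_mul_sub_of_antitoneOn hφanti (hSpos x hx0)
      (hSpos z (hx0.out.trans hz.out.le))
    simp only [Pi.add_apply, Function.comp_apply]
    linarith

/-- The Lyapunov functional `E = V + ψ(S)` is nonincreasing along solutions of
the differential inequalities `S' ≤ V`, `V' ≤ -φ(S) V`. -/
theorem stmt_2 (S V φ : ℝ → ℝ)
    (hS : ContDiffOn ℝ 1 S (Ici 0)) (hV : ContDiffOn ℝ 1 V (Ici 0))
    (hSpos : ∀ t ∈ Ici (0:ℝ), 0 ≤ S t) (hVpos : ∀ t ∈ Ici (0:ℝ), 0 ≤ V t)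
    (hφpos : ∀ r ∈ Ici (0:ℝ), 0 < φ r) (hφanti : AntitoneOn φ (Ici 0))
    (hS' : ∀ t ∈ Ici (0:ℝ), derivWithin S (Ici 0) t ≤ V t)
    (hV' : ∀ t ∈ Ici (0:ℝ), derivWithin V (Ici 0) t ≤ -φ (S t) * V t)
    (ψ : ℝ → ℝ) (hψ : ∀ s, ψ s = ∫ r in (0:ℝ)..s, φ r) :
    ∀ t ∈ Ici (0:ℝ), V t + ψ (S t) ≤ V 0 + ψ (S 0) :=
  stmt_2_general S V φ hS hV hSpos hφpos hφanti hS' hV' ψ hψ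
end

section
/- Let n ≥ 2, and let α₁,…,α_n > 0 with ∑ᵢ αᵢ = 1 and α₁ = α_n (Gauss–Lobatto weights). Suppose f_j(v_j^i) > 0 at the n quadrature points of each cell I_j, with v_j^1 = v_{j−1/2} and v_j^n = v_{j+1/2}, cell averages f̄_j = ∑ᵢ αᵢ f_j(v_j^i), interface values L_{j±1/2} ∈ ℝ, and upwind fluxes f̂_{j+1/2} = f_j(v_{j+1/2}) if L_{j+1/2} ≥ 0, f̂_{j+1/2} = f_{j+1}(v_{j+1/2}) if L_{j+1/2} < 0. Define f̄_j(t+Δt) = f̄_j + (Δt/h)[f̂_{j−1/2}L_{j−1/2} − f̂_{j+1/2}L_{j+1/2}]. If (Δt/h)·max_j |L_{j+1/2}| < α₁, then f̄_j(t+Δt) > 0 for all j. -/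
open Finset

/-- Positivity of cell averages for high-order DG schemes with forward Euler:
if the point values `p j i` at the `n = m+2` Gauss–Lobatto nodes of each cell
are positive (node `0` is the left interface, node `Fin.last` the right one),
the weights `α` are positive, sum to one and are symmetric at the endpoints,
and the CFL condition `(Δt/h) max |L| < α₁` holds, then the forward-Euler
updated cell averages stay positive. -/
theorem stmt_7 (m : ℕ) (h Δt : ℝ) (hh : 0 < h) (hΔt : 0 < Δt)
    (α : Fin (m + 2) → ℝ) (hαpos : ∀ i, 0 < α i) (hαsum : ∑ i, α i = 1)
    (hαsym : α 0 = α (Fin.last (m + 1)))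
    (p : ℤ → Fin (m + 2) → ℝ) (hp : ∀ j i, 0 < p j i)
    (L : ℤ → ℝ) (hCFL : ∀ j, Δt / h * |L j| < α 0)
    (fbar : ℤ → ℝ) (hfbar : ∀ j, fbar j = ∑ i, α i * p j i)
    (fhat : ℤ → ℝ)
    (hfhat : ∀ j, fhat j =
      if 0 ≤ L j then p j (Fin.last (m + 1)) else p (j + 1) 0) :
    ∀ j : ℤ,
      0 < fbar j + Δt / h * (fhat (j - 1) * L (j - 1) - fhat j * L j) := by
  intro j
  set lam := Δt / h with hlam
  have hlampos : 0 < lam := div_pos hΔt hh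
  have hne : (0 : Fin (m + 2)) ≠ Fin.last (m + 1) := by
    simp [Fin.ext_iff, Fin.last]
  -- lower bound on fbar
  have hkey : α 0 * p j 0 + α (Fin.last (m + 1)) * p j (Fin.last (m + 1))
      ≤ fbar j := by
    rw [hfbar j]
    have hpair := Finset.sum_pair (f := fun i => α i * p j i) hne
    have hsub : ∑ i ∈ ({0, Fin.last (m + 1)} : Finset (Fin (m + 2))),
        α i * p j i ≤ ∑ i, α i * p j i := by
      apply Finset.sum_le_sum_of_subset_of_nonneg (Finset.subset_univ _)
      intro i _ _
      exact le_of_lt (mul_pos (hαpos i) (hp j i))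
    rw [hpair] at hsub
    exact hsub
  have hA : 0 < α 0 * p j 0 + lam * (fhat (j - 1) * L (j - 1)) := by
    rw [hfhat (j - 1)]
    by_cases hc : 0 ≤ L (j - 1)
    · rw [if_pos hc]
      have : 0 ≤ lam * (p (j - 1) (Fin.last (m + 1)) * L (j - 1)) :=
        mul_nonneg hlampos.le (mul_nonneg (hp _ _).le hc)
      nlinarith [mul_pos (hαpos 0) (hp j 0)]
    · rw [if_neg hc]
      push_neg at hc
      have h1 := hCFL (j - 1)
      rw [abs_of_neg hc] at h1
      have : j - 1 + 1 = j := by ring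
      rw [this]
      nlinarith [hp j 0]
  have hB : 0 < α (Fin.last (m + 1)) * p j (Fin.last (m + 1))
      - lam * (fhat j * L j) := by
    rw [hfhat j]
    by_cases hc : 0 ≤ L j
    · rw [if_pos hc]
      have h1 := hCFL j
      rw [abs_of_nonneg hc] at h1
      rw [← hαsym]
      nlinarith [hp j (Fin.last (m + 1))]
    · rw [if_neg hc]
      push_neg at hc
      have : 0 < -(lam * (p (j + 1) 0 * L j)) := by
        have := mul_pos hlampos (mul_pos (hp (j + 1) 0) (neg_pos.mpr hc))
        nlinarith
      nlinarith [mul_pos (hαpos (Fin.last (m + 1))) (hp j (Fin.last (m + 1)))]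
  nlinarith [hA, hB, hkey]
end
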